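/- Let (X,d) be a compact metric space and F = {f₁,…,f_k} a finite family of continuous surjective self-maps of X, with iterates ω_n as below and f = f_k∘f_{k-1}∘⋯∘f₁. Then the non-autonomous system (X,F) is distal (for all x ≠ y, liminf_{n→∞} d(ω_n(x),ω_n(y)) > 0) if and only if the autonomous system (X,f) is distal (for all x ≠ y, liminf_{n→∞} d(fⁿ(x),fⁿ(y)) > 0). -/
import Mathlib


open Filter Metric Set Function

/-- The `n`-th iterate `ω_n` of the non-autonomous system generated by the finite family
`f 0, f 1, …, f k` applied cyclically: `ω_0 = id` and `ω_{n+1} = f (n % (k+1)) ∘ ω_n`,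
so that `ω_n = f_{((n-1) mod (k+1)) + 1} ∘ ⋯ ∘ f_2 ∘ f_1` in the paper's (1-based) notation.
The induced autonomous map `f = f_k ∘ ⋯ ∘ f_1` is `omegaIt f (k+1)`. -/
def omegaIt {X : Type*} {k : ℕ} (f : Fin (k + 1) → X → X) : ℕ → X → X
  | 0 => id
  | n + 1 => fun x => f ⟨n % (k + 1), Nat.mod_lt _ (Nat.succ_pos k)⟩ (omegaIt f n x)

lemma omegaIt_add {X : Type*} {k : ℕ} (f : Fin (k + 1) → X → X) (a b : ℕ)
    (ha : a % (k + 1) = 0) (x : X) :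
    omegaIt f (a + b) x = omegaIt f b (omegaIt f a x) := by
  induction b with
  | zero => rfl
  | succ b ih =>
    have hmod : (a + b) % (k + 1) = b % (k + 1) := by
      rw [Nat.add_mod, ha, Nat.zero_add]
      exact Nat.mod_mod_of_dvd b dvd_rfl
    show f ⟨(a + b) % (k + 1), _⟩ (omegaIt f (a + b) x)
      = f ⟨b % (k + 1), _⟩ (omegaIt f b (omegaIt f a x))
    have hfin : (⟨(a + b) % (k + 1), Nat.mod_lt _ (Nat.succ_pos k)⟩ : Fin (k + 1))
        = ⟨b % (k + 1), Nat.mod_lt _ (Nat.succ_pos k)⟩ := Fin.ext hmod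
    rw [hfin, ih]

lemma omegaIt_mul {X : Type*} {k : ℕ} (f : Fin (k + 1) → X → X) (n : ℕ) (x : X) :
    omegaIt f (n * (k + 1)) x = (omegaIt f (k + 1))^[n] x := by
  induction n with
  | zero => simp [omegaIt]
  | succ n ih =>
    have : (n + 1) * (k + 1) = n * (k + 1) + (k + 1) := by ring
    rw [this, omegaIt_add f (n * (k + 1)) (k + 1) (Nat.mul_mod_left _ _) x, ih,
      Function.iterate_succ_apply']

lemma omegaIt_continuous {X : Type*} [TopologicalSpace X] {k : ℕ} (f : Fin (k + 1) → X → X)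
    (hc : ∀ i, Continuous (f i)) (n : ℕ) : Continuous (omegaIt f n) := by
  induction n with
  | zero => exact continuous_id
  | succ n ih => exact (hc _).comp ih

lemma omegaIt_congr {X : Type*} {k : ℕ} (f : Fin (k + 1) → X → X) (r t : ℕ) {a b : X}
    (h : omegaIt f r a = omegaIt f r b) : omegaIt f (r + t) a = omegaIt f (r + t) b := by
  induction t with
  | zero => exact h
  | succ t ih =>
    show f _ (omegaIt f (r + t) a) = f _ (omegaIt f (r + t) b)
    rw [ih]

/-- the non-autonomous system `(X, F)` is distal iff the autonomous system
`(X, f)`, `f = f_k ∘ ⋯ ∘ f_1`, is distal. -/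
theorem distal_nonautonomous_iff_autonomous
    {X : Type*} [MetricSpace X] [CompactSpace X] {k : ℕ} (f : Fin (k + 1) → X → X)
    (hc : ∀ i, Continuous (f i)) (hs : ∀ i, Function.Surjective (f i)) :
    (∀ x y : X, x ≠ y →
      0 < Filter.liminf (fun n : ℕ => dist (omegaIt f n x) (omegaIt f n y)) Filter.atTop) ↔
    (∀ x y : X, x ≠ y →
      0 < Filter.liminf (fun n : ℕ =>
        dist ((omegaIt f (k + 1))^[n] x) ((omegaIt f (k + 1))^[n] y)) Filter.atTop) := by
  set F : X → X := omegaIt f (k + 1) with hF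
  obtain ⟨C, hC⟩ : ∃ C : ℝ, ∀ p q : X, dist p q ≤ C := by
    obtain ⟨C, hC⟩ := Metric.isBounded_iff.mp (isCompact_univ (X := X)).isBounded
    exact ⟨C, fun p q => hC (mem_univ p) (mem_univ q)⟩
  -- boundedness facts for any "distance" sequence
  have hbdd_above : ∀ u v : ℕ → X,
      IsBoundedUnder (· ≤ ·) atTop (fun n => dist (u n) (v n)) :=
    fun u v => Filter.isBoundedUnder_of ⟨C, fun n => hC _ _⟩
  have hbdd_below : ∀ u v : ℕ → X,
      IsBoundedUnder (· ≥ ·) atTop (fun n => dist (u n) (v n)) :=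
    fun u v => Filter.isBoundedUnder_of ⟨0, fun n => dist_nonneg⟩
  constructor
  · -- nonautonomous distal → autonomous distal
    intro H x y hxy
    have L := H x y hxy
    set u : ℕ → ℝ := fun m => dist (omegaIt f m x) (omegaIt f m y) with hu
    have hcob : IsCoboundedUnder (· ≥ ·) atTop u :=
      (hbdd_above (fun m => omegaIt f m x) (fun m => omegaIt f m y)).isCoboundedUnder_ge
    have hev : ∀ᶠ m in atTop, liminf u atTop / 2 < u m :=
      eventually_lt_of_lt_liminf (by linarith)
        (hbdd_below (fun m => omegaIt f m x) (fun m => omegaIt f m y))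
    have hmul : Tendsto (fun n : ℕ => n * (k + 1)) atTop atTop :=
      tendsto_atTop_mono (fun n => Nat.le_mul_of_pos_right n (Nat.succ_pos k)) tendsto_id
    have hev2 : ∀ᶠ n in atTop, liminf u atTop / 2 < dist (F^[n] x) (F^[n] y) := by
      filter_upwards [hmul.eventually hev] with n hn
      simpa only [hu, omegaIt_mul] using hn
    have := le_liminf_of_le
      ((hbdd_above (fun n => F^[n] x) (fun n => F^[n] y)).isCoboundedUnder_ge) (hev2.mono fun n hn => hn.le)
    linarith
  · -- autonomous distal → nonautonomous distal
    intro H x y hxy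
    by_contra hcon
    push_neg at hcon
    set u : ℕ → ℝ := fun m => dist (omegaIt f m x) (omegaIt f m y) with hu
    have hfreq : ∀ j : ℕ, ∃ᶠ m in atTop, u m < 1 / (j + 1) := by
      intro j
      refine frequently_lt_of_liminf_lt
        ((hbdd_above (fun m => omegaIt f m x) (fun m => omegaIt f m y)).isCoboundedUnder_ge) ?_
      have : (0 : ℝ) < 1 / (j + 1) := by positivity
      exact lt_of_le_of_lt hcon this
    obtain ⟨φ, hφmono, hφ⟩ := Filter.extraction_forall_of_frequently hfreq
    have hφ0 : Tendsto (fun j => u (φ j)) atTop (nhds 0) := by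
      refine squeeze_zero (fun j => dist_nonneg) (fun j => (hφ j).le) ?_
      exact tendsto_one_div_add_atTop_nhds_zero_nat
    -- pigeonhole on residues mod (k+1)
    obtain ⟨r, hr⟩ := Finite.exists_infinite_fiber
      (fun j => (⟨φ j % (k + 1), Nat.mod_lt _ (Nat.succ_pos k)⟩ : Fin (k + 1)))
    have hrfreq : ∃ᶠ j in atTop,
        (⟨φ j % (k + 1), Nat.mod_lt _ (Nat.succ_pos k)⟩ : Fin (k + 1)) = r := by
      rw [Nat.frequently_atTop_iff_infinite]
      exact Set.infinite_coe_iff.mp hr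
    obtain ⟨ψ, hψmono, hψ⟩ := Filter.extraction_of_frequently_atTop hrfreq
    set φ' : ℕ → ℕ := φ ∘ ψ with hφ'
    have hφ'mono : StrictMono φ' := hφmono.comp hψmono
    set q : ℕ → ℕ := fun j => φ' j / (k + 1) with hq
    have hdecomp : ∀ j, φ' j = q j * (k + 1) + (r : ℕ) := by
      intro j
      have h1 : φ' j % (k + 1) = (r : ℕ) := congrArg Fin.val (hψ j)
      have h2 := Nat.div_add_mod (φ' j) (k + 1)
      have h3 : q j = φ' j / (k + 1) := rfl
      rw [h3, Nat.mul_comm]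
      omega
    -- compactness: extract convergent subsequences of F^[q j] x and F^[q j] y
    obtain ⟨a, -, ψ1, hψ1mono, ha⟩ := isCompact_univ.tendsto_subseq
      (x := fun j => F^[q j] x) (fun j => mem_univ _)
    obtain ⟨b, -, ψ2, hψ2mono, hb⟩ := isCompact_univ.tendsto_subseq
      (x := fun j => F^[q (ψ1 j)] y) (fun j => mem_univ _)
    set σ : ℕ → ℕ := ψ1 ∘ ψ2 with hσ
    have hσmono : StrictMono σ := hψ1mono.comp hψ2mono
    have hax : Tendsto (fun j => F^[q (σ j)] x) atTop (nhds a) :=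
      ha.comp hψ2mono.tendsto_atTop
    have hby : Tendsto (fun j => F^[q (σ j)] y) atTop (nhds b) := hb
    -- rewriting the omega iterates along the subsequence
    have hrew : ∀ z : X, ∀ j, omegaIt f (φ' (σ j)) z = omegaIt f (r : ℕ) (F^[q (σ j)] z) := by
      intro z j
      rw [hdecomp (σ j), omegaIt_add f _ _ (Nat.mul_mod_left _ _), omegaIt_mul]
    have hcontr : Continuous (omegaIt f (r : ℕ)) := omegaIt_continuous f hc _
    have hlim1 : Tendsto (fun j => omegaIt f (φ' (σ j)) x) atTop (nhds (omegaIt f (r : ℕ) a)) := by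
      simp only [hrew]
      exact (hcontr.tendsto a).comp hax
    have hlim2 : Tendsto (fun j => omegaIt f (φ' (σ j)) y) atTop (nhds (omegaIt f (r : ℕ) b)) := by
      simp only [hrew]
      exact (hcontr.tendsto b).comp hby
    have hdist0 : Tendsto (fun j => u (φ' (σ j))) atTop (nhds 0) :=
      hφ0.comp (hψmono.comp hσmono).tendsto_atTop
    have hdlim : Tendsto (fun j => u (φ' (σ j))) atTop
        (nhds (dist (omegaIt f (r : ℕ) a) (omegaIt f (r : ℕ) b))) := hlim1.dist hlim2
    have hrab : omegaIt f (r : ℕ) a = omegaIt f (r : ℕ) b :=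
      dist_eq_zero.mp (tendsto_nhds_unique hdlim hdist0)
    have hFab : F a = F b := by
      have hrk : (r : ℕ) + (k + 1 - (r : ℕ)) = k + 1 := by
        have := r.isLt; omega
      have := omegaIt_congr f (r : ℕ) (k + 1 - (r : ℕ)) hrab
      rwa [hrk] at this
    have hab : a = b := by
      by_contra hab
      have hL := H a b hab
      have hev : ∀ᶠ n in atTop, dist (F^[n] a) (F^[n] b) ≤ 0 := by
        rw [eventually_atTop]
        refine ⟨1, fun n hn => ?_⟩
        obtain ⟨m, rfl⟩ := Nat.exists_eq_add_of_le hn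
        rw [add_comm]
        simp only [Function.iterate_add_apply, Function.iterate_one, hFab]
        simp
      have := liminf_le_of_frequently_le hev.frequently
        (hbdd_below (fun n => F^[n] a) (fun n => F^[n] b))
      linarith
    subst hab
    have hdistF : Tendsto (fun j => dist (F^[q (σ j)] x) (F^[q (σ j)] y)) atTop (nhds 0) := by
      have := hax.dist hby
      rwa [dist_self] at this
    have hqtends : Tendsto (fun j => q (σ j)) atTop atTop := by
      rw [tendsto_atTop_atTop]
      refine fun N => ⟨N * (k + 1), fun j hj => ?_⟩
      have h1 : j ≤ φ' (σ j) := (hφ'mono.comp hσmono).le_apply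
      have h2 := hdecomp (σ j)
      have : N * (k + 1) ≤ q (σ j) * (k + 1) + (r : ℕ) := by omega
      by_contra hNq
      push_neg at hNq
      have := r.isLt
      nlinarith
    have hle : liminf (fun n : ℕ => dist (F^[n] x) (F^[n] y)) atTop ≤ 0 := by
      refine le_of_forall_pos_le_add fun ε hε => ?_
      have hev : ∀ᶠ j in atTop, dist (F^[q (σ j)] x) (F^[q (σ j)] y) ≤ 0 + ε := by
        filter_upwards [hdistF.eventually (eventually_lt_nhds (by linarith : (0:ℝ) < 0 + ε))]
          with j hj using hj.le
      have hfr : ∃ᶠ n in atTop, dist (F^[n] x) (F^[n] y) ≤ 0 + ε :=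
        hqtends.frequently hev.frequently
      exact liminf_le_of_frequently_le hfr (hbdd_below (fun n => F^[n] x) (fun n => F^[n] y))
    have := H x y hxy
    linarith
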